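/- arXiv:2212.14303 — 3 statements merged into one kernel-verified Lean document; each statement's English description precedes it below -/
import Mathlib

section
/- Let λ > 0, α > 0 and n be a positive integer. Then for every t > 0, the n-th derivative of t ↦ E_{α,1}(−λ t^α) satisfies (d^n/dt^n) E_{α,1}(−λ t^α) = −λ t^{α−n} E_{α,α−n+1}(−λ t^α). -/
/-- The Mittag-Leffler function `E_{α,β}(z) = ∑_{k=0}^∞ z^k / Γ(αk+β)`.
(In Lean, `Real.Gamma` vanishes at the poles of `Γ`, and division by zero is zero,
so the summand is interpreted as `0` there.) -/
noncomputable def mittagLeffler (α β z : ℝ) : ℝ :=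
  ∑' k : ℕ, z ^ k / Real.Gamma (α * k + β)

/-!
Termwise, `t^{β-1} E_{α,β}(c t^α) = ∑ₖ cᵏ t^{αk+β-1} / Γ(αk+β)`, and since
`Γ(e) = (e-1) Γ(e-1)` the derivative of `t^{e-1}/Γ(e)` is `t^{e-2}/Γ(e-1)`: differentiating
lowers `β` by one.
Termwise differentiation is legitimate because `Γ` outgrows every exponential, which makes
the differentiated series converge locally uniformly on `t > 0`. Starting from `β = 1`, the
`n`-th derivative is `t^{-n} E_{α,1-n}(c t^α)`; for `n ≥ 1` its `k = 0` term `1/Γ(1-n)`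
vanishes, and the remaining terms are `c t^{α-n} E_{α,α-n+1}(c t^α)`.
-/

open Filter Topology Set Real

lemma eventually_pow_succ_le_Gamma_natCast {C : ℝ} (hC : 0 < C) :
    ∀ᶠ n : ℕ in atTop, C ^ (n + 1) ≤ Gamma n := by
  obtain ⟨N, hN⟩ := eventually_atTop.1 <|
    (FloorSemiring.tendsto_pow_div_factorial_atTop C).eventually_le_const
      (by positivity : 0 < (C ^ 2)⁻¹)
  refine eventually_atTop.2 ⟨N + 1, fun n hn => ?_⟩
  obtain ⟨j, rfl⟩ : ∃ j, n = j + 1 := ⟨n - 1, by omega⟩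
  have hj := hN j (by omega)
  rw [div_le_iff₀ (by positivity), inv_mul_eq_div, le_div_iff₀ (by positivity)] at hj
  push_cast
  rw [Gamma_nat_eq_factorial]
  linarith [show C ^ (j + 1 + 1) = C ^ j * C ^ 2 by ring]

lemma eventually_rpow_le_Gamma {C : ℝ} (hC : 1 ≤ C) :
    ∀ᶠ x : ℝ in atTop, C ^ x ≤ Gamma x := by
  filter_upwards [tendsto_nat_floor_atTop.eventually (eventually_pow_succ_le_Gamma_natCast
    (zero_lt_one.trans_le hC)), tendsto_nat_floor_atTop.eventually (eventually_ge_atTop 2),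
    eventually_ge_atTop 0] with x hfloor h2 h0
  calc C ^ x ≤ C ^ ((⌊x⌋₊ + 1 : ℕ) : ℝ) :=
        rpow_le_rpow_of_exponent_le hC (by push_cast; exact (Nat.lt_floor_add_one x).le)
    _ = C ^ (⌊x⌋₊ + 1) := rpow_natCast C _
    _ ≤ Gamma ⌊x⌋₊ := hfloor
    _ ≤ Gamma x := Gamma_strictMonoOn_Ici.monotoneOn (by simpa using mod_cast h2)
        (by simpa using (show (2 : ℝ) ≤ ⌊x⌋₊ from mod_cast h2).trans (Nat.floor_le h0))
        (Nat.floor_le h0)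

lemma summable_pow_div_abs_Gamma {α : ℝ} (hα : 0 < α) (δ : ℝ) {R : ℝ} (hR : 0 ≤ R) :
    Summable fun k : ℕ => R ^ k / |Gamma (α * k + δ)| := by
  set C := (R + 1) ^ α⁻¹
  have hC : 1 ≤ C := one_le_rpow (by linarith) (by positivity)
  have hCα (k : ℕ) : C ^ (α * k + δ) = C ^ δ * (R + 1) ^ k := by
    rw [rpow_add (by positivity), mul_comm]
    congr 1
    rw [← rpow_mul (by linarith), inv_mul_cancel_left₀ hα.ne', rpow_natCast]
  have hlin : Tendsto (fun k : ℕ => α * k + δ) atTop atTop :=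
    tendsto_atTop_add_const_right _ δ (tendsto_natCast_atTop_atTop.const_mul_atTop hα)
  refine .of_norm_bounded_eventually_nat (g := fun k => (C ^ δ)⁻¹ * (R / (R + 1)) ^ k)
    ((summable_geometric_of_lt_one (by positivity)
      ((div_lt_one (by linarith)).2 (by linarith))).mul_left _) ?_
  filter_upwards [hlin.eventually (eventually_rpow_le_Gamma hC)] with k hk
  rw [hCα] at hk
  have hpos : 0 < C ^ δ * (R + 1) ^ k := by positivity
  rw [Real.norm_eq_abs, abs_div, abs_abs, abs_pow, abs_of_nonneg hR, abs_of_pos (hpos.trans_le hk)]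
  calc R ^ k / Gamma (α * k + δ) ≤ R ^ k / (C ^ δ * (R + 1) ^ k) :=
        div_le_div_of_nonneg_left (by positivity) hpos hk
    _ = (C ^ δ)⁻¹ * (R / (R + 1)) ^ k := by rw [div_pow]; field_simp

lemma summable_mittagLeffler {α : ℝ} (hα : 0 < α) (β z : ℝ) :
    Summable fun k : ℕ => z ^ k / Gamma (α * k + β) :=
  .of_norm <| by simpa [abs_div, abs_pow] using summable_pow_div_abs_Gamma hα β (abs_nonneg z)

lemma mittagLeffler_eq_inv_Gamma_add_mul {α : ℝ} (hα : 0 < α) (β z : ℝ) :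
    mittagLeffler α β z = (Gamma β)⁻¹ + z * mittagLeffler α (β + α) z := by
  rw [mittagLeffler, (summable_mittagLeffler hα β z).tsum_eq_zero_add, mittagLeffler,
    ← tsum_mul_left]
  congr 1
  · simp
  · congr 1 with k
    push_cast
    rw [pow_succ, show α * (k + 1) + β = α * k + (β + α) by ring]
    ring

lemma hasDerivAt_rpow_sub_one_div_Gamma (e : ℝ) {t : ℝ} (ht : 0 < t) :
    HasDerivAt (fun s => s ^ (e - 1) / Gamma e) (t ^ (e - 1 - 1) / Gamma (e - 1)) t := by
  refine ((hasDerivAt_rpow_const (p := e - 1) (Or.inl ht.ne')).div_const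
    (Gamma e)).congr_deriv ?_
  -- `Γ(e) = (e - 1) Γ(e - 1)`; at `e = 1` both sides vanish since `Γ 0 = 0`.
  rcases eq_or_ne (e - 1) 0 with he | he
  · simp [he, Gamma_zero]
  · rw [show Gamma e = (e - 1) * Gamma (e - 1) by
      rw [← Gamma_add_one he, sub_add_cancel]]
    rcases eq_or_ne (Gamma (e - 1)) 0 with hG | hG
    · simp [hG]
    · field_simp

noncomputable def mittagLefflerKernel (α β c t : ℝ) : ℝ :=
  t ^ (β - 1) * mittagLeffler α β (c * t ^ α)

lemma rpow_sub_one_mul_pow_div_Gamma (α β c : ℝ) (k : ℕ) {t : ℝ} (ht : 0 < t) :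
    t ^ (β - 1) * ((c * t ^ α) ^ k / Gamma (α * k + β))
      = c ^ k * (t ^ (α * k + β - 1) / Gamma (α * k + β)) := by
  rw [mul_pow, ← rpow_natCast (t ^ α), ← rpow_mul ht.le, add_sub_assoc, rpow_add ht,
    mul_comm α]
  ring

lemma mittagLefflerKernel_eq_tsum (α β c : ℝ) {t : ℝ} (ht : 0 < t) :
    mittagLefflerKernel α β c t
      = ∑' k : ℕ, c ^ k * (t ^ (α * k + β - 1) / Gamma (α * k + β)) := by
  rw [mittagLefflerKernel, mittagLeffler, ← tsum_mul_left]
  exact tsum_congr fun k => rpow_sub_one_mul_pow_div_Gamma α β c k ht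

lemma norm_pow_mul_rpow_div_Gamma_le {α : ℝ} (hα : 0 ≤ α) (γ c : ℝ) (k : ℕ) {y b M : ℝ}
    (hy : 0 < y) (hyb : y ≤ b) (hM : y ^ (γ - 1) ≤ M) :
    ‖c ^ k * (y ^ (α * k + γ - 1) / Gamma (α * k + γ))‖
      ≤ M * ((|c| * b ^ α) ^ k / |Gamma (α * k + γ)|) := by
  rw [← rpow_sub_one_mul_pow_div_Gamma α γ c k hy, norm_mul, norm_div, norm_pow, norm_mul,
    Real.norm_of_nonneg (rpow_nonneg hy.le _), Real.norm_of_nonneg (rpow_nonneg hy.le _),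
    Real.norm_eq_abs c, Real.norm_eq_abs (Gamma _)]
  have hyα : y ^ α ≤ b ^ α := rpow_le_rpow hy.le hyb hα
  exact mul_le_mul hM (div_le_div_of_nonneg_right (pow_le_pow_left₀ (by positivity)
    (mul_le_mul_of_nonneg_left hyα (abs_nonneg c)) k) (abs_nonneg _)) (by positivity)
    ((rpow_nonneg hy.le _).trans hM)

lemma hasDerivAt_mittagLefflerKernel {α : ℝ} (hα : 0 < α) (β c : ℝ) {t : ℝ} (ht : 0 < t) :
    HasDerivAt (mittagLefflerKernel α β c) (mittagLefflerKernel α (β - 1) c t) t := by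
  have hU : Ioo (t / 2) (2 * t) ∈ 𝓝 t := Ioo_mem_nhds (by linarith) (by linarith)
  have hpos {y : ℝ} (hy : y ∈ Icc (t / 2) (2 * t)) : 0 < y := by linarith [hy.1]
  obtain ⟨M, hM⟩ := isCompact_Icc.exists_bound_of_continuousOn
    (continuousOn_id.rpow_const fun y hy => Or.inl (hpos hy).ne' :
      ContinuousOn (· ^ (β - 1 - 1)) (Icc (t / 2) (2 * t)))
  have hsum := hasDerivAt_tsum_of_isPreconnected
    (g := fun (k : ℕ) s => c ^ k * (s ^ (α * k + β - 1) / Gamma (α * k + β)))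
    (g' := fun (k : ℕ) s => c ^ k * (s ^ (α * k + (β - 1) - 1) / Gamma (α * k + (β - 1))))
    ((summable_pow_div_abs_Gamma hα (β - 1) (by positivity : 0 ≤ |c| * (2 * t) ^ α)).mul_left M)
    isOpen_Ioo isPreconnected_Ioo
    (fun k y hy => by
      simpa only [add_sub_assoc] using (hasDerivAt_rpow_sub_one_div_Gamma (α * k + β)
        (hpos (Ioo_subset_Icc_self hy))).const_mul (c ^ k))
    (fun k y hy => norm_pow_mul_rpow_div_Gamma_le hα.le (β - 1) c k
      (hpos (Ioo_subset_Icc_self hy)) hy.2.le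
      ((Real.le_norm_self _).trans (hM y (Ioo_subset_Icc_self hy))))
    (mem_of_mem_nhds hU)
    (((summable_mittagLeffler hα β (c * t ^ α)).mul_left (t ^ (β - 1))).congr
      fun k => rpow_sub_one_mul_pow_div_Gamma α β c k ht)
    (mem_of_mem_nhds hU)
  rw [mittagLefflerKernel_eq_tsum α _ c ht]
  exact hsum.congr_of_eventuallyEq <| eventually_of_mem (Ioi_mem_nhds ht)
    fun s hs => mittagLefflerKernel_eq_tsum α β c hs

lemma iteratedDeriv_mittagLefflerKernel {α : ℝ} (hα : 0 < α) (β c : ℝ) (n : ℕ) {t : ℝ}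
    (ht : 0 < t) :
    iteratedDeriv n (mittagLefflerKernel α β c) t = mittagLefflerKernel α (β - n) c t := by
  induction n generalizing t with
  | zero => simp
  | succ n ih =>
    have hn :
        iteratedDeriv n (mittagLefflerKernel α β c) =ᶠ[𝓝 t] mittagLefflerKernel α (β - n) c :=
      eventually_of_mem (Ioi_mem_nhds ht) fun s hs => ih hs
    rw [iteratedDeriv_succ, hn.deriv_eq, (hasDerivAt_mittagLefflerKernel hα _ c ht).deriv]
    push_cast
    ring_nf

theorem mittagLeffler_iteratedDeriv_general (α lam : ℝ) (hα : 0 < α)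
    (n : ℕ) (hn : 0 < n) (t : ℝ) (ht : 0 < t) :
    iteratedDeriv n (fun s : ℝ => mittagLeffler α 1 (-(lam * s ^ α))) t
      = -lam * t ^ (α - n) * mittagLeffler α (α - n + 1) (-(lam * t ^ α)) := by
  have hfun :
      (fun s : ℝ => mittagLeffler α 1 (-(lam * s ^ α))) = mittagLefflerKernel α 1 (-lam) := by
    ext s
    simp [mittagLefflerKernel]
  have hpole : Gamma (1 - n) = 0 := by
    obtain ⟨m, rfl⟩ := Nat.exists_eq_add_of_lt hn
    simpa using Gamma_neg_nat_eq_zero m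
  rw [hfun, iteratedDeriv_mittagLefflerKernel hα 1 (-lam) n ht, mittagLefflerKernel,
    mittagLeffler_eq_inv_Gamma_add_mul hα, hpole, inv_zero, zero_add,
    show (1 : ℝ) - n + α = α - n + 1 by ring, sub_sub_cancel_left,
    show α - n = -n + α by ring, rpow_add ht, neg_mul]
  ring

/-- For `λ > 0`, `α > 0`, a positive integer `n`, and every `t > 0`,
`(d^n/dt^n) E_{α,1}(−λ t^α) = −λ t^{α−n} E_{α,α−n+1}(−λ t^α)`. -/
theorem mittagLeffler_iteratedDeriv (α lam : ℝ) (hα : 0 < α) (hlam : 0 < lam)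
    (n : ℕ) (hn : 0 < n) (t : ℝ) (ht : 0 < t) :
    iteratedDeriv n (fun s : ℝ => mittagLeffler α 1 (-(lam * s ^ α))) t
      = -lam * t ^ (α - n) * mittagLeffler α (α - n + 1) (-(lam * t ^ α)) :=
  mittagLeffler_iteratedDeriv_general α lam hα n hn t ht
end

section
/- Let α > 0, γ > 0, λ > 0 and t > 0. Then (1/Γ(γ)) ∫₀ᵗ (t−τ)^{γ−1} E_{α,1}(−λ τ^α) dτ = t^γ E_{α,γ+1}(−λ t^α); that is, I^γ applied to τ ↦ E_{α,1}(−λ τ^α) equals t^γ E_{α,γ+1}(−λ t^α). -/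
open MeasureTheory Set

theorem integral_sub_rpow_mul_rpow {p q t : ℝ} (hp : 0 < p) (hq : 0 < q) (ht : 0 < t) :
    ∫ τ in (0:ℝ)..t, (t - τ) ^ (q - 1) * τ ^ (p - 1)
      = Real.Gamma p * Real.Gamma q / Real.Gamma (p + q) * t ^ (p + q - 1) := by
  apply Complex.ofReal_injective
  have hbeta := Complex.betaIntegral_scaled p q ht
  rw [Complex.betaIntegral_eq_Gamma_mul_div _ _ (by simpa) (by simpa)] at hbeta
  rw [← intervalIntegral.integral_ofReal]
  convert hbeta using 1
  · refine intervalIntegral.integral_congr fun τ hτ => ?_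
    rw [uIcc_of_le ht.le] at hτ
    push_cast [Complex.ofReal_cpow hτ.1, Complex.ofReal_cpow (sub_nonneg.2 hτ.2)]
    ring
  · push_cast [Complex.ofReal_cpow ht.le, ← Complex.Gamma_ofReal]
    ring

theorem intervalIntegrable_sub_rpow_mul_rpow {p q t : ℝ} (hp : 0 < p) (hq : 0 < q) (ht : 0 < t) :
    IntervalIntegrable (fun τ => (t - τ) ^ (q - 1) * τ ^ (p - 1)) volume 0 t := by
  -- the integral is nonzero, so the integrand cannot have been sent to the junk value `0`
  by_contra h
  have hpos : 0 < Real.Gamma p * Real.Gamma q / Real.Gamma (p + q) * t ^ (p + q - 1) := by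
    have := Real.Gamma_pos_of_pos hp
    have := Real.Gamma_pos_of_pos hq
    have := Real.Gamma_pos_of_pos (add_pos hp hq)
    positivity
  rw [← integral_sub_rpow_mul_rpow hp hq ht, intervalIntegral.integral_undef h] at hpos
  exact hpos.false

theorem Real.exists_factorial_le_Gamma {x : ℝ} (hx : 2 ≤ x) :
    ∃ m : ℕ, x - 2 ≤ m ∧ (m.factorial : ℝ) ≤ Real.Gamma x := by
  have hfloor : 2 ≤ ⌊x⌋₊ := Nat.le_floor (by exact_mod_cast hx)
  refine ⟨⌊x⌋₊ - 1, ?_, ?_⟩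
  · push_cast [Nat.cast_sub (one_le_two.trans hfloor)]
    linarith [Nat.lt_floor_add_one x]
  · rw [← Real.Gamma_nat_eq_factorial, Nat.cast_sub (one_le_two.trans hfloor), Nat.cast_one,
      sub_add_cancel]
    exact Real.Gamma_strictMonoOn_Ici.monotoneOn (mem_Ici.2 (by exact_mod_cast hfloor))
      (mem_Ici.2 hx) (Nat.floor_le (by linarith))

theorem norm_pow_div_Gamma_le {α β : ℝ} (hα : 0 < α) (z : ℝ) {k : ℕ} (hk : 4 + 2 * |β| ≤ α * k) :
    ‖z ^ k / Real.Gamma (α * k + β)‖ ≤ Real.exp (max 1 (2 * |z|) ^ (2 / α)) * (1 / 2) ^ k := by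
  set w := max 1 (2 * |z|)
  -- `hk` makes `α k + β ≥ 2` and forces the factorial index `m ≥ α k + β - 2` to be `≥ α k / 2`
  obtain ⟨m, hm, hfact⟩ := Real.exists_factorial_le_Gamma (x := α * k + β)
    (by linarith [neg_abs_le β, abs_nonneg β])
  have hpow : |z| ^ k ≤ (w ^ (2 / α)) ^ m * (1 / 2) ^ k := by
    calc |z| ^ k = (2 * |z|) ^ k * (1 / 2) ^ k := by rw [← mul_pow]; ring_nf
    _ ≤ w ^ k * (1 / 2) ^ k := by gcongr; exact le_max_right _ _
    _ ≤ (w ^ (2 / α)) ^ m * (1 / 2) ^ k := by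
        gcongr
        rw [← Real.rpow_natCast, ← Real.rpow_natCast, ← Real.rpow_mul (by positivity)]
        refine Real.rpow_le_rpow_of_exponent_le (le_max_left _ _) ?_
        rw [div_mul_eq_mul_div, le_div_iff₀ hα]
        linarith [neg_abs_le β]
  have hfact_pos : (0:ℝ) < m.factorial := by exact_mod_cast m.factorial_pos
  calc ‖z ^ k / Real.Gamma (α * k + β)‖ = |z| ^ k / Real.Gamma (α * k + β) := by
        rw [norm_div, norm_pow, Real.norm_eq_abs, Real.norm_of_nonneg (hfact_pos.le.trans hfact)]
    _ ≤ |z| ^ k / m.factorial := by gcongr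
    _ ≤ (w ^ (2 / α)) ^ m * (1 / 2) ^ k / m.factorial := by gcongr
    _ = (w ^ (2 / α)) ^ m / m.factorial * (1 / 2) ^ k := by ring
    _ ≤ Real.exp (w ^ (2 / α)) * (1 / 2) ^ k := by
        gcongr
        exact Real.pow_div_factorial_le_exp _ (by positivity) m

theorem summable_norm_pow_div_Gamma {α : ℝ} (hα : 0 < α) (β z : ℝ) :
    Summable fun k : ℕ => ‖z ^ k / Real.Gamma (α * k + β)‖ := by
  refine Summable.of_norm_bounded_eventually_nat
    (summable_geometric_two.mul_left (Real.exp (max 1 (2 * |z|) ^ (2 / α)))) ?_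
  filter_upwards [(tendsto_natCast_atTop_atTop.const_mul_atTop hα).eventually_ge_atTop
    (4 + 2 * |β|)] with k hk
  rw [norm_norm]
  exact norm_pow_div_Gamma_le hα z hk

noncomputable def riemannLiouvilleIntegral (γ : ℝ) (φ : ℝ → ℝ) (t : ℝ) : ℝ :=
  1 / Real.Gamma γ * ∫ τ in (0:ℝ)..t, (t - τ) ^ (γ - 1) * φ τ

section

variable {α β γ t : ℝ}

theorem setIntegral_Ioc_mittagLeffler_term (hα : 0 ≤ α) (hβ : 0 < β) (hγ : 0 < γ) (ht : 0 < t)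
    (w : ℝ) (k : ℕ) :
    ∫ τ in Ioc 0 t, w ^ k / Real.Gamma (α * k + β) * ((t - τ) ^ (γ - 1) * τ ^ (α * k + β - 1))
      = Real.Gamma γ * t ^ (β + γ - 1) * ((w * t ^ α) ^ k / Real.Gamma (α * k + (β + γ))) := by
  have hp : 0 < α * k + β := by positivity
  have := (Real.Gamma_pos_of_pos hp).ne'
  rw [integral_const_mul, ← intervalIntegral.integral_of_le ht.le,
    integral_sub_rpow_mul_rpow hp hγ ht, mul_pow, ← Real.rpow_natCast (t ^ α) k,
    ← Real.rpow_mul ht.le, show α * k + β + γ - 1 = α * k + (β + γ - 1) by ring,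
    Real.rpow_add ht, add_assoc]
  field_simp

theorem riemannLiouvilleIntegral_rpow_mul_mittagLeffler (hα : 0 < α) (hβ : 0 < β) (hγ : 0 < γ)
    (ht : 0 < t) (z : ℝ) :
    riemannLiouvilleIntegral γ (fun τ => τ ^ (β - 1) * mittagLeffler α β (z * τ ^ α)) t
      = t ^ (β + γ - 1) * mittagLeffler α (β + γ) (z * t ^ α) := by
  set F : ℝ → ℕ → ℝ → ℝ := fun w k τ =>
    w ^ k / Real.Gamma (α * k + β) * ((t - τ) ^ (γ - 1) * τ ^ (α * k + β - 1)) with hF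
  have hF_int (k : ℕ) : IntegrableOn (F z k) (Ioc 0 t) :=
    ((intervalIntegrable_iff_integrableOn_Ioc_of_le ht.le).1
      (intervalIntegrable_sub_rpow_mul_rpow (by positivity) hγ ht)).const_mul _
  have hF_norm (k : ℕ) : EqOn (fun τ => ‖F z k τ‖) (F |z| k) (Ioc 0 t) := by
    intro τ hτ
    have hkernel : 0 ≤ (t - τ) ^ (γ - 1) * τ ^ (α * k + β - 1) :=
      mul_nonneg (Real.rpow_nonneg (sub_nonneg.2 hτ.2) _) (Real.rpow_nonneg hτ.1.le _)
    simp only [hF]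
    rw [norm_mul, Real.norm_of_nonneg hkernel, norm_div, norm_pow, Real.norm_eq_abs,
      Real.norm_of_nonneg (Real.Gamma_pos_of_pos (by positivity : 0 < α * k + β)).le]
  have hF_sum : Summable fun k => ∫ τ in Ioc 0 t, ‖F z k τ‖ := by
    refine ((summable_norm_pow_div_Gamma hα (β + γ) (z * t ^ α)).mul_left
      (Real.Gamma γ * t ^ (β + γ - 1))).congr fun k => ?_
    rw [setIntegral_congr_fun measurableSet_Ioc (hF_norm k), hF,
      setIntegral_Ioc_mittagLeffler_term hα.le hβ hγ ht, norm_div, norm_pow, norm_mul,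
      Real.norm_eq_abs, Real.norm_eq_abs, abs_of_pos (Real.rpow_pos_of_pos ht α),
      Real.norm_of_nonneg (Real.Gamma_pos_of_pos (by positivity)).le]
  have hseries : EqOn (fun τ => (t - τ) ^ (γ - 1) * (τ ^ (β - 1) * mittagLeffler α β (z * τ ^ α)))
      (fun τ => ∑' k, F z k τ) (Ioc 0 t) := by
    intro τ hτ
    simp only [mittagLeffler, ← tsum_mul_left]
    refine tsum_congr fun k => ?_
    simp only [hF]
    rw [mul_pow, ← Real.rpow_natCast (τ ^ α) k, ← Real.rpow_mul hτ.1.le,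
      show α * k + β - 1 = α * k + (β - 1) by ring, Real.rpow_add hτ.1]
    ring
  rw [riemannLiouvilleIntegral, intervalIntegral.integral_of_le ht.le,
    setIntegral_congr_fun measurableSet_Ioc hseries,
    ← integral_tsum_of_summable_integral_norm hF_int hF_sum]
  simp only [hF, setIntegral_Ioc_mittagLeffler_term hα.le hβ hγ ht, tsum_mul_left, mittagLeffler]
  field_simp

end

theorem RL_integral_mittagLeffler_gamma_general (α γ lam t : ℝ) (hα : 0 < α) (hγ : 0 < γ)
    (ht : 0 < t) :
    (1 / Real.Gamma γ) * ∫ τ in (0:ℝ)..t, (t - τ) ^ (γ - 1) * mittagLeffler α 1 (-(lam * τ ^ α))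
      = t ^ γ * mittagLeffler α (γ + 1) (-(lam * t ^ α)) := by
  have h := riemannLiouvilleIntegral_rpow_mul_mittagLeffler hα one_pos hγ ht (-lam)
  simp only [riemannLiouvilleIntegral, sub_self, Real.rpow_zero, one_mul, add_comm 1 γ,
    add_sub_cancel_right, neg_mul] at h
  exact h

/-- For `α > 0`, `γ > 0`, `λ > 0` and `t > 0`,
`(1/Γ(γ)) ∫₀ᵗ (t−τ)^{γ−1} E_{α,1}(−λ τ^α) dτ = t^γ E_{α,γ+1}(−λ t^α)`. -/
theorem RL_integral_mittagLeffler_gamma (α γ lam t : ℝ) (hα : 0 < α) (hγ : 0 < γ)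
    (hlam : 0 < lam) (ht : 0 < t) :
    (1 / Real.Gamma γ) * ∫ τ in (0:ℝ)..t, (t - τ) ^ (γ - 1) * mittagLeffler α 1 (-(lam * τ ^ α))
      = t ^ γ * mittagLeffler α (γ + 1) (-(lam * t ^ α)) :=
  RL_integral_mittagLeffler_gamma_general α γ lam t hα hγ ht
end

section
/- Let α > 0, λ > 0, T > 0 and let v : [0,T] → ℝ be continuous. If v(t) + λ (1/Γ(α)) ∫₀ᵗ (t−τ)^{α−1} v(τ) dτ = 0 for every t ∈ [0,T], then v(t) = 0 for every t ∈ [0,T]. -/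
/-!
Put `c = |λ / Γ(α)|`. If `v` already vanishes on `[0, a]`, the equation at `t ∈ [a, b]` only sees
the integral over `[a, t]`, so `|v t| ≤ c (b - a)^α / α · sup_{[a, b]} |v|`. Choosing a step `δ`
with `c δ^α / α < 1` forces `v = 0` on `[a, a + δ]`, and finitely many steps cover `[0, T]`.
-/

open Set MeasureTheory intervalIntegral

theorem forall_mem_Icc_of_step {K : Type*} [AddCommGroup K] [LinearOrder K] [IsOrderedAddMonoid K]
    [Archimedean K] {P : K → Prop} {T δ : K} (hδ : 0 < δ) (h₀ : P 0)
    (hstep : ∀ a ∈ Icc 0 T, (∀ s ∈ Icc 0 a, P s) → ∀ t ∈ Icc a T, t ≤ a + δ → P t) :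
    ∀ t ∈ Icc 0 T, P t := by
  have hle_nsmul : ∀ n : ℕ, ∀ t ∈ Icc 0 T, t ≤ n • δ → P t := by
    intro n
    induction n with
    | zero =>
      intro t ht htn
      rwa [le_antisymm (by simpa using htn) ht.1]
    | succ n ih =>
      intro t ht htn
      by_cases h : t ≤ n • δ
      · exact ih t ht h
      push Not at h
      have ha : n • δ ∈ Icc 0 T := ⟨nsmul_nonneg hδ.le n, h.le.trans ht.2⟩
      exact hstep _ ha (fun s hs => ih s ⟨hs.1, hs.2.trans ha.2⟩ hs.2) t ⟨h.le, ht.2⟩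
        (succ_nsmul δ n ▸ htn)
  intro t ht
  obtain ⟨n, hn⟩ := Archimedean.arch t hδ
  exact hle_nsmul n t ht hn

theorem intervalIntegral.integral_eq_of_eqOn_zero {E : Type*} [NormedAddCommGroup E]
    [NormedSpace ℝ E] {μ : Measure ℝ} {f : ℝ → E} {a b c : ℝ}
    (hf : IntervalIntegrable f μ b c) (hzero : EqOn f 0 (uIcc a b)) :
    ∫ x in a..c, f x ∂μ = ∫ x in b..c, f x ∂μ := by
  have hf₀ : IntervalIntegrable f μ a b :=
    (intervalIntegrable_congr (hzero.mono uIoc_subset_uIcc)).2 IntervalIntegrable.zero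
  rw [← integral_add_adjacent_intervals hf₀ hf, integral_congr hzero]
  simp

section RiemannLiouvilleKernel

variable {α : ℝ}

theorem intervalIntegrable_sub_rpow (hα : 0 < α) (a t : ℝ) :
    IntervalIntegrable (fun τ => (t - τ) ^ (α - 1)) volume a t := by
  simpa using (intervalIntegrable_rpow' (a := t - a) (b := 0)
    (by linarith : (-1 : ℝ) < α - 1)).comp_sub_left t

theorem integral_sub_rpow (hα : 0 < α) (a t : ℝ) :
    ∫ τ in a..t, (t - τ) ^ (α - 1) = (t - a) ^ α / α := by
  rw [integral_comp_sub_left (fun s => s ^ (α - 1)) t, sub_self,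
    integral_rpow (Or.inl (by linarith)), sub_add_cancel, Real.zero_rpow hα.ne', sub_zero]

theorem abs_integral_sub_rpow_mul_le (hα : 0 < α) {v : ℝ → ℝ} {a t M : ℝ} (hat : a ≤ t)
    (hM : ∀ τ ∈ Ioc a t, |v τ| ≤ M) :
    |∫ τ in a..t, (t - τ) ^ (α - 1) * v τ| ≤ (t - a) ^ α / α * M := by
  rw [← integral_sub_rpow hα, ← intervalIntegral.integral_mul_const, ← Real.norm_eq_abs]
  refine norm_integral_le_of_norm_le hat (Filter.Eventually.of_forall fun τ hτ => ?_)
    ((intervalIntegrable_sub_rpow hα a t).mul_const M)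
  have hker : 0 ≤ (t - τ) ^ (α - 1) := Real.rpow_nonneg (by linarith [hτ.2]) _
  rw [Real.norm_eq_abs, abs_mul, abs_of_nonneg hker]
  exact mul_le_mul_of_nonneg_left (hM τ hτ) hker

theorem exists_pos_mul_rpow_div_lt_one (hα : 0 < α) {c : ℝ} (hc : 0 ≤ c) :
    ∃ δ > 0, c * δ ^ α / α < 1 := by
  refine ⟨(α / (c + 1)) ^ α⁻¹, by positivity, ?_⟩
  rw [Real.rpow_inv_rpow (by positivity) hα.ne', div_lt_one hα, mul_div_assoc',
    div_lt_iff₀ (by positivity)]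
  nlinarith

theorem eqOn_zero_of_abs_le_mul_abs_integral (hα : 0 < α) {v : ℝ → ℝ} {a b c : ℝ}
    (hc : 0 ≤ c) (hab : a ≤ b) (hv : ContinuousOn v (Icc a b))
    (hsmall : c * (b - a) ^ α / α < 1)
    (hle : ∀ t ∈ Icc a b, |v t| ≤ c * |∫ τ in a..t, (t - τ) ^ (α - 1) * v τ|) :
    EqOn v 0 (Icc a b) := by
  obtain ⟨t₀, ht₀, hmax⟩ := isCompact_Icc.exists_isMaxOn (nonempty_Icc.2 hab) hv.abs
  set M := |v t₀|
  have hcontract : ∀ t ∈ Icc a b, |v t| ≤ c * (b - a) ^ α / α * M := by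
    intro t ht
    calc |v t| ≤ c * |∫ τ in a..t, (t - τ) ^ (α - 1) * v τ| := hle t ht
      _ ≤ c * ((t - a) ^ α / α * M) := by
        gcongr
        exact abs_integral_sub_rpow_mul_le hα ht.1 fun τ hτ => hmax ⟨hτ.1.le, hτ.2.trans ht.2⟩
      _ ≤ c * ((b - a) ^ α / α * M) := by gcongr <;> linarith [ht.1, ht.2]
      _ = c * (b - a) ^ α / α * M := by ring
  have hM : M = 0 := by nlinarith [hcontract t₀ ht₀, abs_nonneg (v t₀)]
  intro t ht
  exact abs_eq_zero.mp (le_antisymm (by simpa [hM] using hcontract t ht) (abs_nonneg _))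

theorem integral_sub_rpow_mul_eq_of_eqOn_zero (hα : 0 < α) {v : ℝ → ℝ} {a t : ℝ} (ha : 0 ≤ a)
    (hat : a ≤ t) (hv : ContinuousOn v (Icc a t)) (hzero : EqOn v 0 (Icc 0 a)) :
    ∫ τ in (0:ℝ)..t, (t - τ) ^ (α - 1) * v τ = ∫ τ in a..t, (t - τ) ^ (α - 1) * v τ := by
  refine integral_eq_of_eqOn_zero
    ((intervalIntegrable_sub_rpow hα a t).mul_continuousOn (by rwa [uIcc_of_le hat])) ?_
  intro τ hτ
  simp [show v τ = 0 from hzero (by rwa [uIcc_of_le ha] at hτ)]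

end RiemannLiouvilleKernel

theorem fractional_volterra_unique_general (α lam T : ℝ) (hα : 0 < α)
    (v : ℝ → ℝ) (hv : ContinuousOn v (Set.Icc 0 T))
    (heq : ∀ t ∈ Set.Icc (0:ℝ) T,
      v t + lam * ((1 / Real.Gamma α) * ∫ τ in (0:ℝ)..t, (t - τ) ^ (α - 1) * v τ) = 0) :
    ∀ t ∈ Set.Icc (0:ℝ) T, v t = 0 := by
  set c := |lam * (1 / Real.Gamma α)|
  have hc : 0 ≤ c := abs_nonneg _
  have habs : ∀ t ∈ Icc 0 T, |v t| = c * |∫ τ in (0:ℝ)..t, (t - τ) ^ (α - 1) * v τ| := by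
    intro t ht
    rw [eq_neg_of_add_eq_zero_left (heq t ht), abs_neg, ← mul_assoc, abs_mul]
  obtain ⟨δ, hδ, hsmall⟩ := exists_pos_mul_rpow_div_lt_one hα hc
  intro t ht
  have hv₀ : v 0 = 0 := by simpa using habs 0 ⟨le_rfl, ht.1.trans ht.2⟩
  refine forall_mem_Icc_of_step (P := fun s => v s = 0) hδ hv₀ ?_ t ht
  intro a ha hzero
  set b := min (a + δ) T
  have hab : a ≤ b := le_min (by linarith) ha.2
  have hsub : Icc a b ⊆ Icc 0 T := Icc_subset_Icc ha.1 (min_le_right _ _)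
  have hvanish : EqOn v 0 (Icc a b) := by
    refine eqOn_zero_of_abs_le_mul_abs_integral hα hc hab
      (hv.mono hsub) (lt_of_le_of_lt ?_ hsmall) fun s hs => (habs s (hsub hs)).le.trans_eq ?_
    · gcongr
      exact sub_le_iff_le_add'.2 (min_le_left _ _)
    · exact congrArg (c * |·|) (integral_sub_rpow_mul_eq_of_eqOn_zero hα ha.1 hs.1
        (hv.mono ((Icc_subset_Icc_right hs.2).trans hsub)) hzero)
  exact fun s hs hsδ => hvanish ⟨hs.1, le_min hsδ hs.2⟩

/-- Let `α > 0`, `λ > 0`, `T > 0` and `v : [0,T] → ℝ` be continuous.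
If `v(t) + λ (1/Γ(α)) ∫₀ᵗ (t−τ)^{α−1} v(τ) dτ = 0` for every `t ∈ [0,T]`,
then `v` vanishes identically on `[0,T]`. -/
theorem fractional_volterra_unique (α lam T : ℝ) (hα : 0 < α) (hlam : 0 < lam) (hT : 0 < T)
    (v : ℝ → ℝ) (hv : ContinuousOn v (Set.Icc 0 T))
    (heq : ∀ t ∈ Set.Icc (0:ℝ) T,
      v t + lam * ((1 / Real.Gamma α) * ∫ τ in (0:ℝ)..t, (t - τ) ^ (α - 1) * v τ) = 0) :
    ∀ t ∈ Set.Icc (0:ℝ) T, v t = 0 :=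
  fractional_volterra_unique_general α lam T hα v hv heq
end
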